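/- Under the hypotheses of the sufficient-decrease lemma (for each i: ∇f_i is L_i-Lipschitz; ∇f_i(U_i) = −Y_i; U_i⁺ globally minimizes the μ_i-strongly convex local subproblem g_i(U) = f_i(U) + ⟨Y_i, U − Z⟩ + (ρ_i/2)‖U − Z‖²; Z⁺ globally minimizes Z' ↦ 𝓛({U_i⁺}, Z', {Y_i}); ∇f_i(U_i⁺) + Y_i + ρ_i(U_i⁺ − Z⁺) = 0; and Y_i⁺ = Y_i + ρ_i(U_i⁺ − Z⁺)), if additionally the penalty parameters satisfy ρ_i μ_i ≥ 2 L_i² for every i, then the augmented Lagrangian does not increase: 𝓛({U_i⁺}, Z⁺, {Y_i⁺}) ≤ 𝓛({U_i}, Z, {Y_i}). -/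

import Mathlib

/-!
Each client's step `Uᵢ → Uᵢ⁺` exactly minimizes a `μᵢ`-strongly convex function, so it
lowers `𝓛` by at least `μᵢ/2 ‖Uᵢ - Uᵢ⁺‖²`; the consensus step `Z → Z⁺` does not raise `𝓛`.
The dual step raises `𝓛` by exactly `ρᵢ ‖Uᵢ⁺ - Z⁺‖²`. By the optimality conditions
`ρᵢ (Uᵢ⁺ - Z⁺) = ∇fᵢ(Uᵢ) - ∇fᵢ(Uᵢ⁺)`, so this increase is at most `Lᵢ² ‖Uᵢ - Uᵢ⁺‖² / ρᵢ`,
which `ρᵢ μᵢ ≥ 2Lᵢ²` bounds by the decrease `μᵢ/2 ‖Uᵢ - Uᵢ⁺‖²`.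
-/

open scoped RealInnerProductSpace

/-- The augmented Lagrangian of the FedPCA consensus problem. -/
noncomputable def augLag {E : Type*} [NormedAddCommGroup E] [InnerProductSpace ℝ E]
    (N : ℕ) (f : Fin N → E → ℝ) (ρ : Fin N → ℝ)
    (U : Fin N → E) (Z : E) (Y : Fin N → E) : ℝ :=
  (∑ i, f i (U i)) + (∑ i, ⟪Y i, U i - Z⟫) + (∑ i, ρ i / 2 * ‖U i - Z‖ ^ 2)

open Finset

theorem StrongConvexOn.add_sq_le_of_isMinOn {E : Type*} [NormedAddCommGroup E]
    [NormedSpace ℝ E] {s : Set E} {m : ℝ} {f : E → ℝ}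
    (hf : StrongConvexOn s m f) {x y : E} (hx : x ∈ s) (hy : y ∈ s) (hmin : IsMinOn f s x) :
    f x + m / 2 * ‖y - x‖ ^ 2 ≤ f y := by
  have hpos : ∀ t ∈ Set.Ioc (0 : ℝ) 1, f x + (1 - t) * (m / 2 * ‖y - x‖ ^ 2) ≤ f y := by
    rintro t ⟨ht₀, ht₁⟩
    have hconv := hf.2 hx hy (sub_nonneg.2 ht₁) ht₀.le (sub_add_cancel 1 t)
    have hfx : f x ≤ f ((1 - t) • x + t • y) :=
      hmin (hf.1 hx hy (sub_nonneg.2 ht₁) ht₀.le (sub_add_cancel 1 t))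
    rw [smul_eq_mul, smul_eq_mul, norm_sub_rev] at hconv
    have : t * (f x + (1 - t) * (m / 2 * ‖y - x‖ ^ 2)) ≤ t * f y := by
      beta_reduce at hconv
      linarith
    exact le_of_mul_le_mul_left this ht₀
  have hclosed : IsClosed {t : ℝ | f x + (1 - t) * (m / 2 * ‖y - x‖ ^ 2) ≤ f y} :=
    isClosed_le (by fun_prop) continuous_const
  have h0 : (0 : ℝ) ∈ closure (Set.Ioc 0 1) := by
    rw [closure_Ioc zero_ne_one]
    exact ⟨le_rfl, zero_le_one⟩
  simpa using hclosed.closure_subset_iff.2 hpos h0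

section AugmentedLagrangian

variable {E : Type*} [NormedAddCommGroup E] [InnerProductSpace ℝ E] {N : ℕ}
  (f : Fin N → E → ℝ) (ρ : Fin N → ℝ)

theorem augLag_eq_sum (U : Fin N → E) (Z : E) (Y : Fin N → E) :
    augLag N f ρ U Z Y = ∑ i, (f i (U i) + ⟪Y i, U i - Z⟫ + ρ i / 2 * ‖U i - Z‖ ^ 2) := by
  simp only [augLag, sum_add_distrib]

theorem augLag_dual_update (U : Fin N → E) (Z : E) (Y : Fin N → E) :
    augLag N f ρ U Z (fun i => Y i + ρ i • (U i - Z)) =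
      augLag N f ρ U Z Y + ∑ i, ρ i * ‖U i - Z‖ ^ 2 := by
  simp only [augLag, inner_add_left, real_inner_smul_left, real_inner_self_eq_norm_sq,
    sum_add_distrib]
  ring

end AugmentedLagrangian

theorem mul_norm_sq_le_of_lipschitz_residual {E : Type*} [NormedAddCommGroup E]
    [InnerProductSpace ℝ E] {g : E → E} {L ρ μ : ℝ} {u up zp y : E}
    (hlip : ‖g u - g up‖ ≤ L * ‖u - up‖) (hρ : 0 < ρ) (hcond : 2 * L ^ 2 ≤ ρ * μ)
    (hprev : g u = -y) (hopt : g up + y + ρ • (up - zp) = 0) :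
    ρ * ‖up - zp‖ ^ 2 ≤ μ / 2 * ‖u - up‖ ^ 2 := by
  have hres : ρ • (up - zp) = g u - g up := by
    rw [hprev]
    linear_combination (norm := module) hopt
  have hnorm : ρ * ‖up - zp‖ ≤ L * ‖u - up‖ := by
    rw [← Real.norm_of_nonneg hρ.le, ← norm_smul, hres]
    exact hlip
  have hsq := pow_le_pow_left₀ (by positivity) hnorm 2
  refine le_of_mul_le_mul_left ?_ hρ
  nlinarith [sq_nonneg ‖u - up‖]

theorem stmt_5_general {E : Type*} [NormedAddCommGroup E] [InnerProductSpace ℝ E]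
    (N : ℕ)
    (f : Fin N → E → ℝ) (f' : Fin N → E → E)
    (L ρ μ : Fin N → ℝ) (hρ : ∀ i, 0 < ρ i)
    (hlip : ∀ i x y, ‖f' i x - f' i y‖ ≤ L i * ‖x - y‖)
    (U Up : Fin N → E) (Z Zp : E) (Y Yp : Fin N → E)
    (hprev : ∀ i, f' i (U i) = -(Y i))
    (hsc : ∀ i, ConvexOn ℝ Set.univ
      (fun V => (f i V + ⟪Y i, V - Z⟫ + ρ i / 2 * ‖V - Z‖ ^ 2) - μ i / 2 * ‖V‖ ^ 2))
    (hUmin : ∀ i (V : E),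
      f i (Up i) + ⟪Y i, Up i - Z⟫ + ρ i / 2 * ‖Up i - Z‖ ^ 2 ≤
        f i V + ⟪Y i, V - Z⟫ + ρ i / 2 * ‖V - Z‖ ^ 2)
    (hZmin : ∀ Z' : E, augLag N f ρ Up Zp Y ≤ augLag N f ρ Up Z' Y)
    (hopt : ∀ i, f' i (Up i) + Y i + ρ i • (Up i - Zp) = 0)
    (hdual : ∀ i, Yp i = Y i + ρ i • (Up i - Zp))
    (hcond : ∀ i, 2 * (L i) ^ 2 ≤ ρ i * μ i) :
    augLag N f ρ Up Zp Yp ≤ augLag N f ρ U Z Y := by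
  have hgrowth : ∀ i, (f i (Up i) + ⟪Y i, Up i - Z⟫ + ρ i / 2 * ‖Up i - Z‖ ^ 2) +
      μ i / 2 * ‖U i - Up i‖ ^ 2 ≤ f i (U i) + ⟪Y i, U i - Z⟫ + ρ i / 2 * ‖U i - Z‖ ^ 2 :=
    fun i => (strongConvexOn_iff_convex.2 (hsc i)).add_sq_le_of_isMinOn
      (Set.mem_univ _) (Set.mem_univ _) fun V _ => hUmin i V
  have hresidual : ∀ i, ρ i * ‖Up i - Zp‖ ^ 2 ≤ μ i / 2 * ‖U i - Up i‖ ^ 2 := fun i =>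
    mul_norm_sq_le_of_lipschitz_residual (hlip i _ _) (hρ i) (hcond i) (hprev i) (hopt i)
  calc augLag N f ρ Up Zp Yp = augLag N f ρ Up Zp Y + ∑ i, ρ i * ‖Up i - Zp‖ ^ 2 := by
        rw [funext hdual, augLag_dual_update]
    _ ≤ augLag N f ρ Up Z Y + ∑ i, μ i / 2 * ‖U i - Up i‖ ^ 2 :=
        add_le_add (hZmin Z) (sum_le_sum fun i _ => hresidual i)
    _ ≤ augLag N f ρ U Z Y := by
        rw [augLag_eq_sum, augLag_eq_sum, ← sum_add_distrib]
        exact sum_le_sum fun i _ => hgrowth i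

/-- Monotone-decrease condition in Lemma 2: under the sufficient-decrease
hypotheses, if moreover `ρᵢ μᵢ ≥ 2Lᵢ²` for every `i`, then the augmented
Lagrangian does not increase: `𝓛({Uᵢ⁺}, Z⁺, {Yᵢ⁺}) ≤ 𝓛({Uᵢ}, Z, {Yᵢ})`. -/
theorem stmt_5 {E : Type*} [NormedAddCommGroup E] [InnerProductSpace ℝ E] [CompleteSpace E]
    (N : ℕ) (hN : 1 ≤ N)
    (f : Fin N → E → ℝ) (f' : Fin N → E → E)
    (L ρ μ : Fin N → ℝ) (hL : ∀ i, 0 ≤ L i) (hρ : ∀ i, 0 < ρ i) (hμ : ∀ i, 0 < μ i)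
    (hdiff : ∀ i x, HasGradientAt (f i) (f' i x) x)
    (hlip : ∀ i x y, ‖f' i x - f' i y‖ ≤ L i * ‖x - y‖)
    (U Up : Fin N → E) (Z Zp : E) (Y Yp : Fin N → E)
    (hprev : ∀ i, f' i (U i) = -(Y i))
    (hsc : ∀ i, ConvexOn ℝ Set.univ
      (fun V => (f i V + ⟪Y i, V - Z⟫ + ρ i / 2 * ‖V - Z‖ ^ 2) - μ i / 2 * ‖V‖ ^ 2))
    (hUmin : ∀ i (V : E),
      f i (Up i) + ⟪Y i, Up i - Z⟫ + ρ i / 2 * ‖Up i - Z‖ ^ 2 ≤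
        f i V + ⟪Y i, V - Z⟫ + ρ i / 2 * ‖V - Z‖ ^ 2)
    (hZmin : ∀ Z' : E, augLag N f ρ Up Zp Y ≤ augLag N f ρ Up Z' Y)
    (hopt : ∀ i, f' i (Up i) + Y i + ρ i • (Up i - Zp) = 0)
    (hdual : ∀ i, Yp i = Y i + ρ i • (Up i - Zp))
    (hcond : ∀ i, 2 * (L i) ^ 2 ≤ ρ i * μ i) :
    augLag N f ρ Up Zp Yp ≤ augLag N f ρ U Z Y :=
  stmt_5_general N f f' L ρ μ hρ hlip U Up Z Zp Y Yp hprev hsc hUmin hZmin hopt hdual hcond
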